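/- Let G be a simple graph with proper coloring c and attribute function A, let δ be a natural number, and let S be a clique of G with |cnt_S(a) − cnt_S(b)| ≤ δ. Then for every vertex v ∈ S, |S| ≤ 2·min(D_a(v), D_b(v)) + δ + 2. -/

import Mathlib

/-!
The vertices of the clique `S` other than `v` are neighbours of `v` and receive pairwise
distinct colours, so each attribute class of `S` has at most `D_t(v) + 1` elements. Writing
`|S| = cnt_S(a) + cnt_S(b) ≤ 2 cnt_S(t) + δ` for either attribute `t` gives the bound.
-/

namespace SimpleGraph

variable {V : Type*} {G : SimpleGraph V} {S : Finset V} {c : V → ℕ}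

theorem IsClique.injOn_of_adj_ne (hc : ∀ u v : V, G.Adj u v → c u ≠ c v)
    (hS : G.IsClique (S : Set V)) : Set.InjOn c S := fun _ hu _ hw hcuw =>
  of_not_not fun huw => hc _ _ (hS hu hw huw) hcuw

theorem IsClique.card_filter_le_card_image_neighborFinset_filter
    (hc : ∀ u v : V, G.Adj u v → c u ≠ c v) (hS : G.IsClique (S : Set V)) {v : V} (hv : v ∈ S)
    [Fintype (G.neighborSet v)] (p : V → Prop) [DecidablePred p] :
    (S.filter p).card ≤ (((G.neighborFinset v).filter p).image c).card + 1 := by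
  classical
  have hsub : (S.filter p).erase v ⊆ (G.neighborFinset v).filter p := by
    intro w hw
    obtain ⟨hwv, hwS, hpw⟩ : w ≠ v ∧ w ∈ S ∧ p w := by simpa [and_assoc] using hw
    simpa [hpw] using hS hv hwS hwv.symm
  have hinj : Set.InjOn c ((S.filter p).erase v : Set V) :=
    (hS.injOn_of_adj_ne hc).mono <| Finset.coe_subset.mpr <|
      (Finset.erase_subset v _).trans (S.filter_subset p)
  calc (S.filter p).card ≤ ((S.filter p).erase v).card + 1 :=
      Nat.sub_le_iff_le_add.mp Finset.pred_card_le_card_erase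
    _ = (((S.filter p).erase v).image c).card + 1 := by rw [Finset.card_image_of_injOn hinj]
    _ ≤ (((G.neighborFinset v).filter p).image c).card + 1 := by gcongr

end SimpleGraph

theorem stmt_12_general {V : Type*} [Fintype V]
    (G : SimpleGraph V) [DecidableRel G.Adj]
    (c : V → ℕ) (hc : ∀ u v : V, G.Adj u v → c u ≠ c v)
    (A : V → Bool) (δ : ℕ)
    (S : Finset V) (hclique : G.IsClique (S : Set V))
    (hδ : |((S.filter (fun v => A v = true)).card : ℤ) -
            ((S.filter (fun v => A v = false)).card : ℤ)| ≤ (δ : ℤ)) :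
    ∀ v ∈ S,
      S.card ≤
        2 * min (((G.neighborFinset v).filter (fun w => A w = true)).image c).card
                (((G.neighborFinset v).filter (fun w => A w = false)).image c).card
          + δ + 2 := by
  intro v hv
  have hsplit : (S.filter (fun w => A w = true)).card +
      (S.filter (fun w => A w = false)).card = S.card := by
    simpa using S.card_filter_add_card_filter_not (fun w => A w = true)
  have ha := hclique.card_filter_le_card_image_neighborFinset_filter hc hv (fun w => A w = true)
  have hb := hclique.card_filter_le_card_image_neighborFinset_filter hc hv (fun w => A w = false)
  rw [abs_le] at hδ
  omega

/-- for a clique `S` whose attribute counts differ by at most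
`δ`, every `v ∈ S` satisfies `|S| ≤ 2 * min(D_a(v), D_b(v)) + δ + 2`. -/
theorem stmt_12 {V : Type*} [Fintype V] [DecidableEq V]
    (G : SimpleGraph V) [DecidableRel G.Adj]
    (c : V → ℕ) (hc : ∀ u v : V, G.Adj u v → c u ≠ c v)
    (A : V → Bool) (δ : ℕ)
    (S : Finset V) (hclique : G.IsClique (S : Set V))
    (hδ : |((S.filter (fun v => A v = true)).card : ℤ) -
            ((S.filter (fun v => A v = false)).card : ℤ)| ≤ (δ : ℤ)) :
    ∀ v ∈ S,
      S.card ≤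
        2 * min (((G.neighborFinset v).filter (fun w => A w = true)).image c).card
                (((G.neighborFinset v).filter (fun w => A w = false)).image c).card
          + δ + 2 :=
  stmt_12_general G c hc A δ S hclique hδ
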